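/- arXiv:2510.13576 — 2 statements merged into one kernel-verified Lean document; each statement's English description precedes it below -/
import Mathlib

section
/- Let N ≥ 2 be an integer, let p, q be real exponents with 1 < q < N and q < p, and let m satisfy p-1 < m < N(q-1)/(N-1). If u ∈ C¹(ℝ^N) is positive and satisfies -Δ_p u - Δ_q u ≥ |∇u|^m weakly in ℝ^N, then u is constant. -/
open MeasureTheory Filter Metric

noncomputable section

/-- `u` satisfies `-Δ_p u - Δ_q u ≥ f` weakly in `Ω`: for every nonnegative
`φ ∈ C¹_c(Ω)`, `∫_Ω |∇u|^{p-2} ∇u·∇φ + ∫_Ω |∇u|^{q-2} ∇u·∇φ ≥ ∫_Ω f φ`. -/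
def WeakPQSuper (N : ℕ) (p q : ℝ) (Ω : Set (EuclideanSpace ℝ (Fin N)))
    (u f : EuclideanSpace ℝ (Fin N) → ℝ) : Prop :=
  ∀ φ : EuclideanSpace ℝ (Fin N) → ℝ,
    ContDiff ℝ 1 φ → HasCompactSupport φ → tsupport φ ⊆ Ω → (∀ x, 0 ≤ φ x) →
    ∫ x in Ω, f x * φ x ≤
      (∫ x in Ω, ‖gradient u x‖ ^ (p - 2) * (inner ℝ (gradient u x) (gradient φ x) : ℝ)) +
      ∫ x in Ω, ‖gradient u x‖ ^ (q - 2) * (inner ℝ (gradient u x) (gradient φ x) : ℝ)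

/-- An exterior domain: a nonempty open connected set containing `{x : |x| > R}`
for some `R > 0`. -/
def IsExteriorDomain {N : ℕ} (Ω : Set (EuclideanSpace ℝ (Fin N))) : Prop :=
  IsOpen Ω ∧ IsConnected Ω ∧ ∃ R > 0, {x : EuclideanSpace ℝ (Fin N) | R < ‖x‖} ⊆ Ω

open Topology

/-!
Test the inequality with `φ = ψ_R ^ k`, where `ψ_R` is a cutoff equal to `1` on `B_R`, supported
in `B_{2R}`, with `|∇ψ_R| ≤ K / R`, and `k` is a large integer. For `r ∈ {p, q}`, Young's inequality
with the conjugate exponents `m / (r - 1)` and `θ_r = m / (m - r + 1)` absorbs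
`|∇u|^(r-1) k ψ^(k-1) |∇ψ|` into `¼ |∇u|^m ψ^k + C (k |∇ψ|)^θ_r`, whence
`∫_{B_R} |∇u|^m ≤ C (R^(N - θ_p) + R^(N - θ_q))`. The upper bound on `m` says exactly `θ_q > N`,
and `θ_p > θ_q` because `p > q`; letting `R → ∞` gives `∇u = 0`.
-/

theorem young_inequality_weighted {a b s t ε : ℝ} (ha : 0 ≤ a) (hb : 0 ≤ b) (hε : 0 < ε)
    (hst : s.HolderConjugate t) : a * b ≤ ε * a ^ s + ε ^ (1 - t) * b ^ t := by
  set l := ε ^ s⁻¹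
  have hl : 0 < l := Real.rpow_pos_of_pos hε _
  have hls : l ^ s = ε := by rw [← Real.rpow_mul hε.le, inv_mul_cancel₀ hst.ne_zero, Real.rpow_one]
  have hlt : l⁻¹ ^ t = ε ^ (1 - t) := by
    rw [Real.inv_rpow hl.le, ← Real.rpow_neg hl.le, ← Real.rpow_mul hε.le, ← div_eq_inv_mul,
      neg_div, hst.symm.div_conj_eq_sub_one, neg_sub]
  calc a * b = (l * a) * (l⁻¹ * b) := by field_simp
    _ ≤ (l * a) ^ s / s + (l⁻¹ * b) ^ t / t :=
      Real.young_inequality_of_nonneg (by positivity) (by positivity) hst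
    _ ≤ (l * a) ^ s + (l⁻¹ * b) ^ t := by
      gcongr
      · exact div_le_self (by positivity) hst.lt.le
      · exact div_le_self (by positivity) hst.symm.lt.le
    _ = ε * a ^ s + ε ^ (1 - t) * b ^ t := by
      rw [Real.mul_rpow hl.le ha, Real.mul_rpow (inv_nonneg.2 hl.le) hb, hls, hlt]

theorem rpow_sub_one_mul_le_quarter_add {m r κ a t d : ℝ} (hr : 1 < r) (hrm : r - 1 < m)
    (hκ : m / (m - r + 1) ≤ κ) (ha : 0 ≤ a) (ht₀ : 0 ≤ t) (ht₁ : t ≤ 1) (hd : 0 ≤ d) :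
    a ^ (r - 1) * (κ * t ^ (κ - 1) * d) ≤
      1 / 4 * (a ^ m * t ^ κ) + 4 ^ (m / (m - r + 1) - 1) * (κ * d) ^ (m / (m - r + 1)) := by
  have hm : 0 < m := by linarith
  have hmr : 0 < m - r + 1 := by linarith
  set θ := m / (m - r + 1)
  set s := m / (r - 1)
  have hθ : 1 < θ := (one_lt_div hmr).2 (by linarith)
  have hκ₀ : 0 ≤ κ := by linarith
  have hconj : s.HolderConjugate θ := by
    rw [Real.holderConjugate_iff]
    refine ⟨(one_lt_div (by linarith)).2 hrm, ?_⟩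
    simp only [s, θ, inv_div]
    field_simp
    ring
  -- split `t ^ (κ - 1)` so that one factor turns `a ^ (r - 1)` into `(a ^ m * t ^ κ) ^ (1 / s)`
  have he₁ : 0 ≤ κ / s := by positivity
  have he₂ : 0 ≤ κ - 1 - κ / s := by
    have : κ - 1 - κ / s = κ / θ - 1 := by
      rw [div_eq_mul_inv κ s, ← hconj.symm.one_sub_inv]; field_simp; ring
    rw [this, sub_nonneg, le_div_iff₀ (by linarith)]
    linarith
  have hsplit : t ^ (κ - 1) = t ^ (κ / s) * t ^ (κ - 1 - κ / s) := by
    rw [← Real.rpow_add_of_nonneg ht₀ he₁ he₂]; ring_nf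
  have hX : (a ^ (r - 1) * t ^ (κ / s)) ^ s = a ^ m * t ^ κ := by
    rw [Real.mul_rpow (by positivity) (by positivity), ← Real.rpow_mul ha, ← Real.rpow_mul ht₀]
    have hs : (r - 1) * s = m := mul_div_cancel₀ m (by linarith)
    rw [hs, div_mul_cancel₀ _ hconj.ne_zero]
  have hY : (κ * d * t ^ (κ - 1 - κ / s)) ^ θ ≤ (κ * d) ^ θ := by
    rw [Real.mul_rpow (by positivity) (by positivity)]
    refine mul_le_of_le_one_right (by positivity) ?_
    exact Real.rpow_le_one (by positivity) (Real.rpow_le_one ht₀ ht₁ he₂) (by positivity)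
  have h4 : (1 / 4 : ℝ) ^ (1 - θ) = 4 ^ (θ - 1) := by
    rw [one_div, Real.inv_rpow (by norm_num), ← Real.rpow_neg (by norm_num), neg_sub]
  calc a ^ (r - 1) * (κ * t ^ (κ - 1) * d)
      = (a ^ (r - 1) * t ^ (κ / s)) * (κ * d * t ^ (κ - 1 - κ / s)) := by rw [hsplit]; ring
    _ ≤ 1 / 4 * (a ^ (r - 1) * t ^ (κ / s)) ^ s +
        (1 / 4) ^ (1 - θ) * (κ * d * t ^ (κ - 1 - κ / s)) ^ θ :=
      young_inequality_weighted (by positivity) (by positivity) (by norm_num) hconj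
    _ ≤ _ := by rw [hX, h4]; gcongr

theorem rpow_div_mul_pow_eq {a R θ c : ℝ} (ha : 0 ≤ a) (hR : 0 < R) (N : ℕ) :
    (a / R) ^ θ * ((2 * R) ^ N * c) = a ^ θ * 2 ^ N * c * R ^ ((N : ℝ) - θ) := by
  rw [Real.div_rpow ha hR.le, Real.rpow_sub hR, Real.rpow_natCast, mul_pow]
  field_simp

theorem lt_div_sub_add_one_of_lt_mul_div {n q m : ℝ} (hn : 1 < n) (hqm : q - 1 < m)
    (hm : m < n * (q - 1) / (n - 1)) : n < m / (m - q + 1) := by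
  rw [lt_div_iff₀ (by linarith)]
  rw [lt_div_iff₀ (by linarith)] at hm
  linarith

theorem abs_rpow_sub_two_mul_inner_le {E : Type*} [NormedAddCommGroup E] [InnerProductSpace ℝ E]
    (a b : E) (r : ℝ) :
    |‖a‖ ^ (r - 2) * inner ℝ a b| ≤ ‖a‖ ^ (r - 1) * ‖b‖ := by
  rcases eq_or_ne a 0 with rfl | ha
  · simp only [inner_zero_left, mul_zero, abs_zero]; positivity
  calc |‖a‖ ^ (r - 2) * inner ℝ a b| ≤ ‖a‖ ^ (r - 2) * (‖a‖ * ‖b‖) := by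
        rw [abs_mul, abs_of_nonneg (by positivity)]
        gcongr
        exact abs_real_inner_le_norm a b
    _ = ‖a‖ ^ (r - 1) * ‖b‖ := by
        rw [← mul_assoc, ← Real.rpow_add_one (norm_ne_zero_iff.2 ha)]; ring_nf

section Gradient

variable {E : Type*} [NormedAddCommGroup E] [InnerProductSpace ℝ E] [CompleteSpace E]
  {f : E → ℝ} {x : E}

theorem norm_gradient_eq_norm_fderiv (f : E → ℝ) (x : E) : ‖gradient f x‖ = ‖fderiv ℝ f x‖ :=
  LinearIsometryEquiv.norm_map _ _

theorem ContDiff.continuous_gradient (hf : ContDiff ℝ 1 f) : Continuous (gradient f) :=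
  (LinearIsometryEquiv.continuous _).comp (hf.continuous_fderiv one_ne_zero)

theorem HasCompactSupport.gradient (hf : HasCompactSupport f) :
    HasCompactSupport (gradient f) :=
  (hf.fderiv (𝕜 := ℝ)).comp_left (map_zero _)

theorem gradient_of_notMem_tsupport (h : x ∉ tsupport f) : gradient f x = 0 := by
  rw [gradient, fderiv_of_notMem_tsupport ℝ h, map_zero]

theorem norm_gradient_pow (hf : DifferentiableAt ℝ f x) (hx : 0 ≤ f x) (k : ℕ) :
    ‖gradient (fun y => f y ^ k) x‖ = k * f x ^ (k - 1) * ‖gradient f x‖ := by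
  rw [norm_gradient_eq_norm_fderiv, norm_gradient_eq_norm_fderiv, fderiv_fun_pow k hf,
    norm_smul, nsmul_eq_mul, Real.norm_of_nonneg (by positivity)]

theorem exists_contDiff_cutoff [FiniteDimensional ℝ E] :
    ∃ K ≥ 0, ∀ R > 0, ∃ ψ : E → ℝ, ContDiff ℝ 1 ψ ∧ (∀ x, ψ x ∈ Set.Icc 0 1) ∧
      Set.EqOn ψ 1 (closedBall 0 R) ∧ tsupport ψ ⊆ closedBall 0 (2 * R) ∧
      ∀ x, ‖gradient ψ x‖ ≤ K / R := by
  let b : ContDiffBump (0 : E) := ⟨1, 2, one_pos, one_lt_two⟩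
  obtain ⟨K, hK⟩ := (b.hasCompactSupport.fderiv (𝕜 := ℝ)).exists_bound_of_continuous
    (b.contDiff.continuous_fderiv one_ne_zero)
  refine ⟨K, (norm_nonneg _).trans (hK 0), fun R hR => ⟨fun x => b (R⁻¹ • x),
    b.contDiff.comp (contDiff_const_smul _),
    fun x => ⟨b.nonneg, b.le_one⟩, fun x hx => b.one_of_mem_closedBall ?_, ?_, fun x => ?_⟩⟩
  · rw [mem_closedBall_zero_iff, norm_smul, norm_inv, Real.norm_of_nonneg hR.le]
    exact inv_mul_le_one_of_le₀ (mem_closedBall_zero_iff.1 hx) hR.le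
  · refine closure_minimal (fun x hx => ?_) isClosed_closedBall
    have hx : R⁻¹ • x ∈ ball 0 2 := b.support_eq ▸ hx
    rw [mem_ball_zero_iff, norm_smul, norm_inv, Real.norm_of_nonneg hR.le,
      inv_mul_lt_iff₀ hR] at hx
    exact mem_closedBall_zero_iff.2 (by linarith)
  · rw [norm_gradient_eq_norm_fderiv, fderiv_comp_smul, norm_smul,
      Real.norm_of_nonneg (by positivity), div_eq_inv_mul]
    exact mul_le_mul_of_nonneg_left (hK _) (by positivity)

end Gradient

section Integrals

variable {E : Type*} [NormedAddCommGroup E] [InnerProductSpace ℝ E] [CompleteSpace E]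
  [MeasurableSpace E] [BorelSpace E] {μ : Measure E}

theorem integrable_rpow_sub_two_mul_inner_gradient [IsFiniteMeasureOnCompacts μ]
    {u φ : E → ℝ} {r : ℝ} (hr : 1 ≤ r) (hu : ContDiff ℝ 1 u) (hφ : ContDiff ℝ 1 φ)
    (hφc : HasCompactSupport φ) :
    Integrable
      (fun x => ‖gradient u x‖ ^ (r - 2) * inner ℝ (gradient u x) (gradient φ x)) μ := by
  have hdom : Integrable (fun x => ‖gradient u x‖ ^ (r - 1) * ‖gradient φ x‖) μ :=
    (((hu.continuous_gradient.norm).rpow_const fun _ => Or.inr (by linarith)).mul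
      hφ.continuous_gradient.norm).integrable_of_hasCompactSupport hφc.gradient.norm.mul_left
  refine hdom.mono' ?_ (ae_of_all _ fun x => abs_rpow_sub_two_mul_inner_le _ _ r)
  exact ((hu.continuous_gradient.measurable.norm.pow_const _).mul
    (hu.continuous_gradient.inner hφ.continuous_gradient).measurable).aestronglyMeasurable

theorem integral_rpow_sub_two_mul_inner_gradient_pow_le [IsFiniteMeasureOnCompacts μ]
    {u ψ : E → ℝ} {m r : ℝ} {k : ℕ} (hu : ContDiff ℝ 1 u) (hψ : ContDiff ℝ 1 ψ)
    (hψc : HasCompactSupport ψ) (hψ01 : ∀ x, ψ x ∈ Set.Icc 0 1) (hr : 1 < r)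
    (hrm : r - 1 < m) (hk : m / (m - r + 1) ≤ k) :
    ∫ x, ‖gradient u x‖ ^ (r - 2) * inner ℝ (gradient u x) (gradient (fun y => ψ y ^ k) x) ∂μ ≤
      1 / 4 * ∫ x, ‖gradient u x‖ ^ m * ψ x ^ k ∂μ +
        4 ^ (m / (m - r + 1) - 1) * ∫ x, (k * ‖gradient ψ x‖) ^ (m / (m - r + 1)) ∂μ := by
  set θ := m / (m - r + 1)
  have hθ : 0 < θ := div_pos (by linarith) (by linarith)
  have hk₁ : 1 ≤ k := by
    have : (1 : ℝ) < k := ((one_lt_div (by linarith)).2 (by linarith)).trans_le hk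
    exact_mod_cast this.le
  have hφc : HasCompactSupport (fun y => ψ y ^ k) :=
    hψc.mono (Function.support_pow ψ (by omega)).le
  have hG := hu.continuous_gradient.norm
  have hint₁ : Integrable (fun x => ‖gradient u x‖ ^ m * ψ x ^ k) μ :=
    ((hG.rpow_const fun _ => Or.inr (by linarith)).mul (hψ.continuous.pow k)
      ).integrable_of_hasCompactSupport hφc.mul_left
  have hint₂ : Integrable (fun x => (k * ‖gradient ψ x‖) ^ θ) μ :=
    ((continuous_const.mul hψ.continuous_gradient.norm).rpow_const fun _ => Or.inr hθ.le
      ).integrable_of_hasCompactSupport (hψc.gradient.norm.mul_left.rpow_const hθ.ne')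
  have hpt : ∀ x, ‖gradient u x‖ ^ (r - 2) *
      inner ℝ (gradient u x) (gradient (fun y => ψ y ^ k) x) ≤
      1 / 4 * (‖gradient u x‖ ^ m * ψ x ^ k) + 4 ^ (θ - 1) * (k * ‖gradient ψ x‖) ^ θ := by
    intro x
    have hpow : (k : ℝ) * ψ x ^ (k - 1) = k * ψ x ^ ((k : ℝ) - 1) := by
      rw [← Nat.cast_pred hk₁, Real.rpow_natCast]
    calc _ ≤ ‖gradient u x‖ ^ (r - 1) * ‖gradient (fun y => ψ y ^ k) x‖ :=
          (le_abs_self _).trans (abs_rpow_sub_two_mul_inner_le _ _ r)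
      _ = ‖gradient u x‖ ^ (r - 1) * (k * ψ x ^ ((k : ℝ) - 1) * ‖gradient ψ x‖) := by
          rw [norm_gradient_pow (hψ.differentiable one_ne_zero x) (hψ01 x).1, hpow]
      _ ≤ _ := by
          rw [← Real.rpow_natCast (ψ x) k]
          exact rpow_sub_one_mul_le_quarter_add hr hrm hk (norm_nonneg _) (hψ01 x).1 (hψ01 x).2
            (norm_nonneg _)
  calc _ ≤ ∫ x, (1 / 4 * (‖gradient u x‖ ^ m * ψ x ^ k) +
        4 ^ (θ - 1) * (k * ‖gradient ψ x‖) ^ θ) ∂μ :=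
        integral_mono (integrable_rpow_sub_two_mul_inner_gradient hr.le hu (hψ.pow k) hφc)
          ((hint₁.const_mul _).add (hint₂.const_mul _)) hpt
    _ = _ := by rw [integral_add (hint₁.const_mul _) (hint₂.const_mul _), integral_const_mul,
        integral_const_mul]

theorem integral_rpow_mul_norm_gradient_le [FiniteDimensional ℝ E] [μ.IsAddHaarMeasure]
    {ψ : E → ℝ} {c L ρ θ : ℝ} (hc : 0 ≤ c) (hθ : 0 < θ) (hρ : 0 ≤ ρ)
    (hψ : tsupport ψ ⊆ closedBall 0 ρ) (hL : ∀ x, ‖gradient ψ x‖ ≤ L) :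
    ∫ x, (c * ‖gradient ψ x‖) ^ θ ∂μ ≤
      (c * L) ^ θ * (ρ ^ Module.finrank ℝ E * μ.real (closedBall 0 1)) := by
  have hL₀ : 0 ≤ L := (norm_nonneg _).trans (hL 0)
  have hvanish : ∀ x ∉ closedBall 0 ρ, (c * ‖gradient ψ x‖) ^ θ = 0 := fun x hx => by
    rw [gradient_of_notMem_tsupport fun h => hx (hψ h), norm_zero, mul_zero,
      Real.zero_rpow hθ.ne']
  rw [← setIntegral_eq_integral_of_forall_compl_eq_zero hvanish,
    ← Measure.addHaar_real_closedBall' μ 0 hρ]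
  refine (Real.le_norm_self _).trans
    (norm_setIntegral_le_of_norm_le_const measure_closedBall_lt_top fun x _ => ?_)
  rw [Real.norm_of_nonneg (by positivity)]
  gcongr
  exact hL x

end Integrals

theorem eq_zero_of_integral_ball_le {E : Type*} [NormedAddCommGroup E] [ProperSpace E]
    [MeasurableSpace E] [BorelSpace E] {μ : Measure E} [IsFiniteMeasureOnCompacts μ]
    [μ.IsOpenPosMeasure] {g : E → ℝ} {F : ℝ → ℝ} (hg : Continuous g) (hg₀ : 0 ≤ g)
    (hF : Tendsto F atTop (𝓝 0)) (hgF : ∀ᶠ R in atTop, ∫ x in ball 0 R, g x ∂μ ≤ F R) :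
    g = 0 := by
  ext x
  set ρ := ‖x‖ + 1
  have hint : ∀ R, IntegrableOn g (ball 0 R) μ := fun R =>
    (hg.continuousOn.integrableOn_compact (isCompact_closedBall 0 R)).mono_set
      ball_subset_closedBall
  have hzero : ∫ y in ball 0 ρ, g y ∂μ = 0 := by
    refine le_antisymm (ge_of_tendsto hF ?_)
      (setIntegral_nonneg measurableSet_ball fun y _ => hg₀ y)
    filter_upwards [hgF, eventually_ge_atTop ρ] with R hR hρR
    exact (setIntegral_mono_set (hint R) (ae_of_all _ fun y => hg₀ y)
      (ball_subset_ball hρR).eventuallyLE).trans hR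
  rw [setIntegral_eq_zero_iff_of_nonneg_ae (ae_of_all _ fun y => hg₀ y) (hint ρ)] at hzero
  exact Measure.eqOn_open_of_ae_eq hzero isOpen_ball hg.continuousOn continuousOn_const
    (mem_ball_zero_iff.2 (lt_add_one _))

theorem WeakPQSuper.exists_integral_ball_le {N : ℕ} {p q m : ℝ}
    {u : EuclideanSpace ℝ (Fin N) → ℝ} (hp : 1 < p) (hq : 1 < q) (hpm : p - 1 < m)
    (hqm : q - 1 < m) (hu : ContDiff ℝ 1 u)
    (hsuper : WeakPQSuper N p q Set.univ u fun x => ‖gradient u x‖ ^ m) :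
    ∃ Cp Cq : ℝ, ∀ R > 0, ∫ x in ball 0 R, ‖gradient u x‖ ^ m ≤
      Cp * R ^ ((N : ℝ) - m / (m - p + 1)) + Cq * R ^ ((N : ℝ) - m / (m - q + 1)) := by
  set θp := m / (m - p + 1)
  set θq := m / (m - q + 1)
  have hθp : 0 < θp := div_pos (by linarith) (by linarith)
  have hθq : 0 < θq := div_pos (by linarith) (by linarith)
  set k := ⌈max θp θq⌉₊
  have hkp : θp ≤ k := (le_max_left _ _).trans (Nat.le_ceil _)
  have hkq : θq ≤ k := (le_max_right _ _).trans (Nat.le_ceil _)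
  obtain ⟨K, hK₀, hK⟩ := exists_contDiff_cutoff (E := EuclideanSpace ℝ (Fin N))
  set c₁ := volume.real (closedBall (0 : EuclideanSpace ℝ (Fin N)) 1)
  refine ⟨2 * 4 ^ (θp - 1) * (k * K) ^ θp * 2 ^ N * c₁,
    2 * 4 ^ (θq - 1) * (k * K) ^ θq * 2 ^ N * c₁, fun R hR => ?_⟩
  obtain ⟨ψ, hψ, hψ01, hψ1, hψs, hψD⟩ := hK R hR
  have hψc : HasCompactSupport ψ :=
    (isCompact_closedBall _ _).of_isClosed_subset (isClosed_tsupport ψ) hψs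
  have hφc : HasCompactSupport (fun y => ψ y ^ k) :=
    hψc.mono (Function.support_pow ψ (Nat.ceil_pos.2 (lt_max_of_lt_left hθp)).ne').le
  have hint : Integrable (fun x => ‖gradient u x‖ ^ m * ψ x ^ k) :=
    ((hu.continuous_gradient.norm.rpow_const fun _ => Or.inr (by linarith)).mul
      (hψ.continuous.pow k)).integrable_of_hasCompactSupport hφc.mul_left
  have hweak := hsuper _ (hψ.pow k) hφc (Set.subset_univ _) fun x => pow_nonneg (hψ01 x).1 k
  simp only [setIntegral_univ] at hweak
  have hfluxp := integral_rpow_sub_two_mul_inner_gradient_pow_le (μ := volume)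
    hu hψ hψc hψ01 hp hpm hkp
  have hfluxq := integral_rpow_sub_two_mul_inner_gradient_pow_le (μ := volume)
    hu hψ hψc hψ01 hq hqm hkq
  have hgradp := integral_rpow_mul_norm_gradient_le (μ := volume)
    k.cast_nonneg hθp (by positivity) hψs hψD
  have hgradq := integral_rpow_mul_norm_gradient_le (μ := volume)
    k.cast_nonneg hθq (by positivity) hψs hψD
  rw [finrank_euclideanSpace_fin, ← mul_div_assoc,
    rpow_div_mul_pow_eq (mul_nonneg k.cast_nonneg hK₀) hR] at hgradp hgradq
  have hball : ∫ x in ball 0 R, ‖gradient u x‖ ^ m ≤ ∫ x, ‖gradient u x‖ ^ m * ψ x ^ k := by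
    calc _ = ∫ x in ball 0 R, ‖gradient u x‖ ^ m * ψ x ^ k :=
          setIntegral_congr_fun measurableSet_ball fun x hx => by
            simp [hψ1 (ball_subset_closedBall hx)]
      _ ≤ _ := setIntegral_le_integral hint
          (ae_of_all _ fun x => mul_nonneg (by positivity) (pow_nonneg (hψ01 x).1 k))
  have h4p : (0 : ℝ) ≤ 4 ^ (θp - 1) := by positivity
  have h4q : (0 : ℝ) ≤ 4 ^ (θq - 1) := by positivity
  -- the two `1 / 4`-multiples of `∫ |∇u|^m ψ^k` are absorbed into the left side of `hweak`
  linarith [mul_le_mul_of_nonneg_left hgradp h4p, mul_le_mul_of_nonneg_left hgradq h4q]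

theorem liouville_pure_gradient_general
    (N : ℕ) (hN : 2 ≤ N) (p q m : ℝ) (hq1 : 1 < q) (hqp : q < p)
    (hm1 : p - 1 < m) (hm2 : m < (N : ℝ) * (q - 1) / ((N : ℝ) - 1))
    (u : EuclideanSpace ℝ (Fin N) → ℝ) (hu : ContDiff ℝ 1 u)
    (hsuper : WeakPQSuper N p q Set.univ u (fun x => ‖gradient u x‖ ^ m)) :
    ∃ c : ℝ, ∀ x, u x = c := by
  have hqm : q - 1 < m := by linarith
  obtain ⟨Cp, Cq, hC⟩ := hsuper.exists_integral_ball_le (hq1.trans hqp) hq1 hm1 hqm hu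
  have hNq : (N : ℝ) < m / (m - q + 1) :=
    lt_div_sub_add_one_of_lt_mul_div (by exact_mod_cast hN) hqm hm2
  have hqp' : m / (m - q + 1) < m / (m - p + 1) :=
    div_lt_div_of_pos_left (by linarith) (by linarith) (by linarith)
  have hdecay : Tendsto (fun R : ℝ => Cp * R ^ ((N : ℝ) - m / (m - p + 1)) +
      Cq * R ^ ((N : ℝ) - m / (m - q + 1))) atTop (𝓝 0) := by
    simpa only [neg_sub, mul_zero, add_zero] using
      ((tendsto_rpow_neg_atTop (sub_pos.2 (hNq.trans hqp'))).const_mul Cp).add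
        ((tendsto_rpow_neg_atTop (sub_pos.2 hNq)).const_mul Cq)
  have hGm := eq_zero_of_integral_ball_le (μ := volume)
    (hu.continuous_gradient.norm.rpow_const fun _ => Or.inr (by linarith))
    (fun x => by positivity) hdecay ((eventually_gt_atTop 0).mono hC)
  have hfderiv : ∀ x, fderiv ℝ u x = 0 := fun x => by
    rw [← norm_eq_zero, ← norm_gradient_eq_norm_fderiv]
    exact (Real.rpow_eq_zero (norm_nonneg _) (by linarith)).1 (congr_fun hGm x)
  exact ⟨u 0, fun x => is_const_of_fderiv_eq_zero (hu.differentiable one_ne_zero) hfderiv x 0⟩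

/-- Liouville theorem in `ℝ^N` for `-Δ_p u - Δ_q u ≥ |∇u|^m` with
`p - 1 < m < N(q-1)/(N-1)`. -/
theorem liouville_pure_gradient
    (N : ℕ) (hN : 2 ≤ N) (p q m : ℝ) (hq1 : 1 < q) (hqN : q < (N : ℝ)) (hqp : q < p)
    (hm1 : p - 1 < m) (hm2 : m < (N : ℝ) * (q - 1) / ((N : ℝ) - 1))
    (u : EuclideanSpace ℝ (Fin N) → ℝ) (hu : ContDiff ℝ 1 u)
    (hupos : ∀ x, 0 < u x)
    (hsuper : WeakPQSuper N p q Set.univ u (fun x => ‖gradient u x‖ ^ m)) :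
    ∃ c : ℝ, ∀ x, u x = c :=
  liouville_pure_gradient_general N hN p q m hq1 hqp hm1 hm2 u hu hsuper
end
end

section
/- Let N ≥ 1 be an integer, let p, q, s be real exponents with 1 < q < s ≤ p and q < p, let Ω ⊆ ℝ^N be an exterior domain, and let u ∈ C¹(Ω) be positive, bounded, and satisfy -Δ_p u - Δ_q u ≥ u^{s-1} weakly in Ω. Then there exists a constant C > 0, depending only on N, p, q, s and sup_Ω u, such that ∫_{B(x₀, R)} u^{s-q} dx ≤ C R^{N-q} for every center x₀ ∈ ℝ^N and radius R ≥ 1 with B(x₀, 2R) ⊆ Ω. -/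
/-!
Test the weak inequality with `φ = u^{1-q} η^{k+1}`, where `η` is a cutoff equal to `1` on
`B(x₀, R)`, supported in `B(x₀, 2R)`, with `|∇η| ≤ K/R`, and `k ≥ p - 1`. On `B(x₀, R)` the
left-hand side is `∫ u^{s-q}`. For `r ∈ {p, q}`, the factor `u^{1-q}` makes the `r`-Laplacian
term contain the good term `(1-q) u^{-q} η^{k+1} |∇u|^r`, which absorbs the cross term
`(k+1) u^{1-q} η^k |∇u|^{r-1} |∇η|` by Young's inequality and leaves at most
`C u^{r-q} |∇η|^r ≤ C M^{r-q} (K/R)^r` on `B(x₀, 2R)`. Integrating gives `C R^{N-r} ≤ C R^{N-q}`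
since `R ≥ 1`.
-/

open MeasureTheory Filter Metric

noncomputable section

open Real

def youngConst (m c r : ℝ) : ℝ := m * (m / c) ^ (r - 1)

lemma youngConst_nonneg {m c : ℝ} (hm : 0 ≤ m) (hc : 0 < c) (r : ℝ) : 0 ≤ youngConst m c r := by
  unfold youngConst; positivity

lemma rpow_eq_rpow_sub_one_mul {x r : ℝ} (hx : 0 ≤ x) (hr : 1 ≤ r) : x ^ r = x ^ (r - 1) * x := by
  rw [← rpow_add_one' hx (by linarith), sub_add_cancel]

lemma pow_mul_sub_le_youngConst {m c r a z t : ℝ} {k : ℕ} (hm : 0 ≤ m) (hc : 0 < c)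
    (hr : 1 ≤ r) (hrk : r - 1 ≤ k) (ha : 0 ≤ a) (hz : 0 ≤ z) (ht₀ : 0 ≤ t) (ht₁ : t ≤ 1) :
    t ^ k * (m * z * a ^ (r - 1) - c * t * a ^ r) ≤ youngConst m c r * z ^ r := by
  rcases le_total (c * (t * a)) (m * z) with h | h
  · have hta : t * a ≤ m / c * z := by rw [div_mul_eq_mul_div, le_div_iff₀ hc]; linarith
    have htk : t ^ k ≤ t ^ (r - 1) := by
      rw [← rpow_natCast]; exact rpow_le_rpow_of_exponent_ge' ht₀ ht₁ (by linarith) hrk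
    calc t ^ k * (m * z * a ^ (r - 1) - c * t * a ^ r)
        ≤ t ^ k * (m * z * a ^ (r - 1)) := by
          gcongr
          exact sub_le_self _ (by positivity)
      _ ≤ t ^ (r - 1) * (m * z * a ^ (r - 1)) := by gcongr
      _ = m * z * (t * a) ^ (r - 1) := by rw [mul_rpow ht₀ ha]; ring
      _ ≤ m * z * (m / c * z) ^ (r - 1) := by gcongr
      _ = youngConst m c r * z ^ r := by
          rw [mul_rpow (by positivity) hz, youngConst, rpow_eq_rpow_sub_one_mul hz hr]
          ring
  · calc t ^ k * (m * z * a ^ (r - 1) - c * t * a ^ r)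
        = t ^ k * a ^ (r - 1) * (m * z - c * (t * a)) := by
          rw [rpow_eq_rpow_sub_one_mul ha hr]; ring
      _ ≤ 0 := mul_nonpos_of_nonneg_of_nonpos (by positivity) (by linarith)
      _ ≤ youngConst m c r * z ^ r := mul_nonneg (youngConst_nonneg hm hc r) (by positivity)

/-- The `r`-Laplacian integrand `|∇u|^{r-2} ∇u·∇φ` at a point, with `v = u x`, `t = η x`,
`a = |∇u x|`, `w = K/R` and `d = Dη(x)(∇u x)`. -/
lemma rpow_sub_two_mul_le_youngConst {q r M v t a w d : ℝ} {k : ℕ} (hq : 1 < q) (hqr : q ≤ r)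
    (hrk : r - 1 ≤ k) (hv : 0 < v) (hvM : v ≤ M) (ht₀ : 0 ≤ t) (ht₁ : t ≤ 1) (ha : 0 ≤ a)
    (hw : 0 ≤ w) (hd : d ≤ w * a) :
    a ^ (r - 2) * ((1 - q) * v ^ (-q) * t ^ (k + 1) * a ^ 2 + (k + 1) * v ^ (1 - q) * t ^ k * d)
      ≤ youngConst (k + 1) (q - 1) r * M ^ (r - q) * w ^ r := by
  have ha₂ : a ^ (r - 2) * a ^ 2 = a ^ r := by
    rw [← rpow_two, ← rpow_add' ha (by linarith), sub_add_cancel]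
  have ha₁ : a ^ (r - 2) * a = a ^ (r - 1) := by
    rw [← rpow_add_one' ha (by linarith)]; ring_nf
  have hv₁ : v ^ (1 - q) = v ^ (-q) * v := by
    rw [← rpow_add_one' hv.le (by linarith)]; ring_nf
  have hcoef : 0 ≤ (k + 1) * v ^ (1 - q) * t ^ k := by positivity
  calc a ^ (r - 2) * ((1 - q) * v ^ (-q) * t ^ (k + 1) * a ^ 2 + (k + 1) * v ^ (1 - q) * t ^ k * d)
      = (1 - q) * v ^ (-q) * t ^ (k + 1) * (a ^ (r - 2) * a ^ 2)
          + (k + 1) * v ^ (1 - q) * t ^ k * (a ^ (r - 2) * d) := by ring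
    _ ≤ (1 - q) * v ^ (-q) * t ^ (k + 1) * (a ^ (r - 2) * a ^ 2)
          + (k + 1) * v ^ (1 - q) * t ^ k * (w * (a ^ (r - 2) * a)) := by
        have hd' : a ^ (r - 2) * d ≤ w * (a ^ (r - 2) * a) := by
          linarith [mul_le_mul_of_nonneg_left hd (rpow_nonneg ha (r - 2))]
        linarith [mul_le_mul_of_nonneg_left hd' hcoef]
    _ = v ^ (-q) * (t ^ k * ((k + 1) * (v * w) * a ^ (r - 1) - (q - 1) * t * a ^ r)) := by
        rw [ha₂, ha₁, hv₁]; ring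
    _ ≤ v ^ (-q) * (youngConst (k + 1) (q - 1) r * (v * w) ^ r) :=
        mul_le_mul_of_nonneg_left (pow_mul_sub_le_youngConst (by positivity) (by linarith)
          (by linarith) hrk ha (by positivity) ht₀ ht₁) (rpow_nonneg hv.le _)
    _ = youngConst (k + 1) (q - 1) r * v ^ (r - q) * w ^ r := by
        rw [mul_rpow hv.le hw, show r - q = -q + r by ring, rpow_add hv]; ring
    _ ≤ youngConst (k + 1) (q - 1) r * M ^ (r - q) * w ^ r := by
        have := youngConst_nonneg (m := k + 1) (c := q - 1) (by positivity) (by linarith) r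
        gcongr

section Cutoff

variable {E : Type*} [NormedAddCommGroup E] [NormedSpace ℝ E]

structure IsCutoff (x₀ : E) (R K : ℝ) (η : E → ℝ) : Prop where
  contDiff : ContDiff ℝ 1 η
  nonneg : ∀ x, 0 ≤ η x
  le_one : ∀ x, η x ≤ 1
  eq_one : ∀ x ∈ ball x₀ R, η x = 1
  tsupport_subset : tsupport η ⊆ ball x₀ (2 * R)
  norm_fderiv_le : ∀ x, ‖fderiv ℝ η x‖ ≤ K / R

lemma exists_isCutoff [FiniteDimensional ℝ E] :
    ∃ K : ℝ, 0 ≤ K ∧ ∀ (x₀ : E) {R : ℝ}, 0 < R → ∃ η, IsCutoff x₀ R K η := by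
  let b : ContDiffBump (0 : E) := ⟨1, 3 / 2, one_pos, by norm_num⟩
  obtain ⟨C, hC⟩ := ContDiff.lipschitzWith_of_hasCompactSupport b.hasCompactSupport
    (b.contDiff (n := 1)) one_ne_zero
  refine ⟨C, C.coe_nonneg, fun x₀ R hR => ⟨fun x => b (R⁻¹ • (x - x₀)), ?_⟩⟩
  have hlip : LipschitzWith (C * ‖R⁻¹‖₊) fun x => b (R⁻¹ • (x - x₀)) := by
    simpa [Function.comp_def] using hC.comp ((lipschitzWith_smul R⁻¹).comp
      (IsometryEquiv.subRight x₀).isometry.lipschitz)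
  have hsupp : tsupport (fun x => b (R⁻¹ • (x - x₀))) ⊆ closedBall x₀ (3 / 2 * R) := by
    refine closure_minimal (fun x hx => ?_) isClosed_closedBall
    have : R⁻¹ • (x - x₀) ∈ ball (0 : E) (3 / 2) := b.support_eq ▸ hx
    rw [mem_ball_zero_iff, norm_smul, norm_inv, Real.norm_eq_abs, abs_of_pos hR,
      inv_mul_lt_iff₀ hR] at this
    rw [mem_closedBall, dist_eq_norm]
    linarith
  refine ⟨b.contDiff.comp ((contDiff_id.sub contDiff_const).const_smul R⁻¹), fun _ => b.nonneg,
    fun _ => b.le_one, fun x hx => b.one_of_mem_closedBall ?_,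
    hsupp.trans (closedBall_subset_ball (by linarith)), fun x => ?_⟩
  · rw [mem_ball, dist_eq_norm] at hx
    change R⁻¹ • (x - x₀) ∈ closedBall 0 1
    rw [mem_closedBall_zero_iff, norm_smul, norm_inv, Real.norm_eq_abs, abs_of_pos hR,
      inv_mul_le_iff₀ hR]
    linarith
  · have := norm_fderiv_le_of_lipschitz ℝ (x₀ := x) hlip
    simpa [div_eq_mul_inv, abs_of_pos hR] using this

end Cutoff

lemma ContDiffOn.contDiff_mul_of_tsupport_subset {E : Type*} [NormedAddCommGroup E]
    [NormedSpace ℝ E] {n : WithTop ℕ∞} {f g : E → ℝ} {Ω : Set E}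
    (hΩ : IsOpen Ω) (hf : ContDiffOn ℝ n f Ω) (hg : ContDiff ℝ n g) (hgΩ : tsupport g ⊆ Ω) :
    ContDiff ℝ n fun x => f x * g x := by
  rw [contDiff_iff_contDiffAt]
  intro x
  by_cases hx : x ∈ Ω
  · exact (hf.contDiffAt (hΩ.mem_nhds hx)).mul hg.contDiffAt
  · refine contDiffAt_const (c := (0 : ℝ)).congr_of_eventuallyEq ?_
    filter_upwards [notMem_tsupport_iff_eventuallyEq.1 fun h => hx (hgΩ h)] with y hy
    simp [hy]

section TestFunction

variable {E : Type*} {u η : E → ℝ} {q : ℝ} {k : ℕ}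

def testFunction (u η : E → ℝ) (q : ℝ) (k : ℕ) (x : E) : ℝ := u x ^ (1 - q) * η x ^ (k + 1)

lemma tsupport_testFunction_subset [TopologicalSpace E] :
    tsupport (testFunction u η q k) ⊆ tsupport η :=
  tsupport_mul_subset_right.trans_eq
    (by rw [tsupport, tsupport, Function.support_pow _ k.succ_ne_zero])

lemma testFunction_nonneg [TopologicalSpace E] {Ω : Set E} (hu : ∀ x ∈ Ω, 0 < u x)
    (hη : ∀ x, 0 ≤ η x) (hηΩ : tsupport η ⊆ Ω) (x : E) : 0 ≤ testFunction u η q k x := by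
  by_cases hx : x ∈ Ω
  · exact mul_nonneg (rpow_nonneg (hu x hx).le _) (pow_nonneg (hη x) _)
  · simp [testFunction, image_eq_zero_of_notMem_tsupport fun h => hx (hηΩ h)]

lemma contDiff_testFunction [NormedAddCommGroup E] [NormedSpace ℝ E] {Ω : Set E} (hΩ : IsOpen Ω)
    (hu : ContDiffOn ℝ 1 u Ω) (hupos : ∀ x ∈ Ω, 0 < u x) (hη : ContDiff ℝ 1 η)
    (hηΩ : tsupport η ⊆ Ω) :
    ContDiff ℝ 1 (testFunction u η q k) :=
  ContDiffOn.contDiff_mul_of_tsupport_subset hΩ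
    (hu.rpow_const_of_ne fun x hx => (hupos x hx).ne') (hη.pow _)
    (by rwa [tsupport, Function.support_pow _ k.succ_ne_zero])

lemma IsCutoff.hasCompactSupport_testFunction [NormedAddCommGroup E] [NormedSpace ℝ E]
    [ProperSpace E] {x₀ : E} {R K : ℝ} (hη : IsCutoff x₀ R K η) :
    HasCompactSupport (testFunction u η q k) :=
  (isCompact_closedBall x₀ (2 * R)).of_isClosed_subset (isClosed_tsupport _)
    (tsupport_testFunction_subset.trans (hη.tsupport_subset.trans ball_subset_closedBall))

lemma inner_gradient_testFunction [NormedAddCommGroup E] [InnerProductSpace ℝ E] [CompleteSpace E]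
    {x : E} (hu : DifferentiableAt ℝ u x) (hux : 0 < u x) (hη : DifferentiableAt ℝ η x) :
    inner ℝ (gradient u x) (gradient (testFunction u η q k) x) =
      (1 - q) * u x ^ (-q) * η x ^ (k + 1) * ‖gradient u x‖ ^ 2
        + (k + 1) * u x ^ (1 - q) * η x ^ k * fderiv ℝ η x (gradient u x) := by
  have hφ : HasFDerivAt (testFunction u η q k)
      (u x ^ (1 - q) • (((k + 1 : ℕ) : ℝ) * η x ^ k) • fderiv ℝ η x
        + η x ^ (k + 1) • ((1 - q) * u x ^ (1 - q - 1)) • fderiv ℝ u x) x :=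
    (hu.hasFDerivAt.rpow_const (Or.inl hux.ne')).mul
      ((hasDerivAt_pow (k + 1) (η x)).comp_hasFDerivAt x hη.hasFDerivAt)
  have hu₂ : fderiv ℝ u x (gradient u x) = ‖gradient u x‖ ^ 2 := by
    rw [← real_inner_self_eq_norm_sq, gradient, InnerProductSpace.toDual_symm_apply]
  rw [real_inner_comm, gradient, InnerProductSpace.toDual_symm_apply, hφ.fderiv]
  simp only [add_apply, smul_apply, smul_eq_mul, hu₂]
  rw [show 1 - q - 1 = -q by ring]
  push_cast
  ring

lemma rpow_mul_inner_gradient_testFunction_le [NormedAddCommGroup E] [InnerProductSpace ℝ E]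
    [CompleteSpace E] {x₀ x : E} {r R K M : ℝ}
    (hq : 1 < q) (hqr : q ≤ r) (hrk : r - 1 ≤ k) (hη : IsCutoff x₀ R K η)
    (hu : DifferentiableAt ℝ u x) (hux : 0 < u x) (huM : u x ≤ M) :
    ‖gradient u x‖ ^ (r - 2) * inner ℝ (gradient u x) (gradient (testFunction u η q k) x) ≤
      (ball x₀ (2 * R)).indicator
        (fun _ => youngConst (k + 1) (q - 1) r * M ^ (r - q) * (K / R) ^ r) x := by
  by_cases hx : x ∈ ball x₀ (2 * R)
  · rw [Set.indicator_of_mem hx,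
      inner_gradient_testFunction hu hux (hη.contDiff.differentiable one_ne_zero x)]
    refine rpow_sub_two_mul_le_youngConst hq hqr hrk hux huM (hη.nonneg x) (hη.le_one x)
      (norm_nonneg _) ((norm_nonneg _).trans (hη.norm_fderiv_le x)) ?_
    calc fderiv ℝ η x (gradient u x) ≤ ‖fderiv ℝ η x‖ * ‖gradient u x‖ :=
          (le_abs_self _).trans ((fderiv ℝ η x).le_opNorm _)
      _ ≤ K / R * ‖gradient u x‖ := by gcongr; exact hη.norm_fderiv_le x
  · have hφx : x ∉ tsupport (testFunction u η q k) :=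
      fun h => hx (hη.tsupport_subset (tsupport_testFunction_subset h))
    simp [Set.indicator_of_notMem hx, gradient, fderiv_of_notMem_tsupport ℝ hφx]

end TestFunction

/-- The weak formulation does not assume its integrands integrable; a non-integrable `f` has
integral `0`. -/
lemma setIntegral_le_of_forall_le {α : Type*} [MeasurableSpace α] {μ : Measure α} {s : Set α}
    {f g : α → ℝ} (hs : MeasurableSet s) (hg : IntegrableOn g s μ)
    (hg₀ : 0 ≤ ∫ x in s, g x ∂μ) (hfg : ∀ x ∈ s, f x ≤ g x) :
    ∫ x in s, f x ∂μ ≤ ∫ x in s, g x ∂μ := by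
  by_cases hf : IntegrableOn f s μ
  · exact setIntegral_mono_on hf hg hs hfg
  · rwa [integral_undef hf]

section LowerBound

variable {E : Type*} [NormedAddCommGroup E] [NormedSpace ℝ E] [ProperSpace E]
  [MeasurableSpace E] [BorelSpace E] {μ : Measure E} [IsFiniteMeasureOnCompacts μ]
  {u η : E → ℝ} {Ω : Set E} {x₀ : E} {q R K : ℝ} {k : ℕ}

lemma setIntegral_ball_rpow_le_setIntegral_mul_testFunction {s : ℝ} (hΩ : IsOpen Ω)
    (hu : ContDiffOn ℝ 1 u Ω) (hupos : ∀ x ∈ Ω, 0 < u x) (hη : IsCutoff x₀ R K η) (hR : 0 ≤ R)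
    (hsub : ball x₀ (2 * R) ⊆ Ω) :
    ∫ x in ball x₀ R, u x ^ (s - q) ∂μ ≤
      ∫ x in Ω, u x ^ (s - 1) * testFunction u η q k x ∂μ := by
  have hηΩ := hη.tsupport_subset.trans hsub
  have hRΩ : ball x₀ R ⊆ Ω := (ball_subset_ball (by linarith)).trans hsub
  have hF : Integrable (fun x => u x ^ (s - 1) * testFunction u η q k x) μ :=
    (ContDiffOn.contDiff_mul_of_tsupport_subset (n := 0) hΩ
      (contDiffOn_zero.2 (hu.continuousOn.rpow_const fun x hx => Or.inl (hupos x hx).ne'))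
      ((contDiff_testFunction hΩ hu hupos hη.contDiff hηΩ).of_le zero_le_one)
      (tsupport_testFunction_subset.trans hηΩ)).continuous.integrable_of_hasCompactSupport
      hη.hasCompactSupport_testFunction.mul_left
  calc ∫ x in ball x₀ R, u x ^ (s - q) ∂μ
      = ∫ x in ball x₀ R, u x ^ (s - 1) * testFunction u η q k x ∂μ :=
        setIntegral_congr_fun measurableSet_ball fun x hx => by
          rw [testFunction, hη.eq_one x hx, one_pow, mul_one, ← rpow_add (hupos x (hRΩ hx))]
          ring_nf
    _ ≤ ∫ x in Ω, u x ^ (s - 1) * testFunction u η q k x ∂μ :=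
        setIntegral_mono_set hF.integrableOn
          ((ae_restrict_iff' hΩ.measurableSet).2 (ae_of_all _ fun x hx =>
            mul_nonneg (rpow_nonneg (hupos x hx).le _)
              (testFunction_nonneg hupos hη.nonneg hηΩ x)))
          hRΩ.eventuallyLE

end LowerBound

section UpperBound

variable {E : Type*} [NormedAddCommGroup E] [InnerProductSpace ℝ E] [CompleteSpace E]
  [ProperSpace E] [MeasurableSpace E] [BorelSpace E] {μ : Measure E} [IsFiniteMeasureOnCompacts μ]
  {u η : E → ℝ} {Ω : Set E} {x₀ : E} {q R K M : ℝ} {k : ℕ}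

lemma setIntegral_rpow_mul_inner_gradient_testFunction_le {r : ℝ} (hq : 1 < q) (hqr : q ≤ r)
    (hrk : r - 1 ≤ k) (hΩ : IsOpen Ω) (hu : DifferentiableOn ℝ u Ω) (hupos : ∀ x ∈ Ω, 0 < u x)
    (huM : ∀ x ∈ Ω, u x ≤ M) (hη : IsCutoff x₀ R K η) (hR : 0 < R)
    (hsub : ball x₀ (2 * R) ⊆ Ω) :
    ∫ x in Ω, ‖gradient u x‖ ^ (r - 2) *
        inner ℝ (gradient u x) (gradient (testFunction u η q k) x) ∂μ ≤
      youngConst (k + 1) (q - 1) r * M ^ (r - q) * (K / R) ^ r * μ.real (ball x₀ (2 * R)) := by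
  set D := youngConst (k + 1) (q - 1) r * M ^ (r - q) * (K / R) ^ r
  have hx₀ : x₀ ∈ Ω := hsub (mem_ball_self (by positivity))
  have hD : 0 ≤ D := by
    have hM : 0 ≤ M := (hupos x₀ hx₀).le.trans (huM x₀ hx₀)
    have hKR : 0 ≤ K / R := (norm_nonneg _).trans (hη.norm_fderiv_le x₀)
    have := youngConst_nonneg (m := k + 1) (by positivity) (by linarith : 0 < q - 1) r
    positivity
  have hint : ∫ x in Ω, (ball x₀ (2 * R)).indicator (fun _ => D) x ∂μ =
      D * μ.real (ball x₀ (2 * R)) := by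
    rw [setIntegral_indicator measurableSet_ball, Set.inter_eq_right.2 hsub, setIntegral_const,
      smul_eq_mul, mul_comm]
  rw [← hint]
  refine setIntegral_le_of_forall_le hΩ.measurableSet
    ((integrable_indicator_iff measurableSet_ball).2
      (integrableOn_const (C := D) measure_ball_lt_top.ne)).integrableOn
    (hint ▸ by positivity) fun x hx => ?_
  exact rpow_mul_inner_gradient_testFunction_le hq hqr hrk hη
    (hu.differentiableAt (hΩ.mem_nhds hx)) (hupos x hx) (huM x hx)

end UpperBound

section WeakSupersolution

variable {N : ℕ} {Ω : Set (EuclideanSpace ℝ (Fin N))} {u η : EuclideanSpace ℝ (Fin N) → ℝ}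
  {x₀ : EuclideanSpace ℝ (Fin N)} {p q s R K M : ℝ} {k : ℕ}

theorem setIntegral_ball_rpow_le_of_weakPQSuper (hq : 1 < q) (hqp : q ≤ p) (hpk : p - 1 ≤ k)
    (hΩ : IsOpen Ω) (hu : ContDiffOn ℝ 1 u Ω) (hupos : ∀ x ∈ Ω, 0 < u x)
    (huM : ∀ x ∈ Ω, u x ≤ M) (hsuper : WeakPQSuper N p q Ω u fun x => u x ^ (s - 1))
    (hη : IsCutoff x₀ R K η) (hR : 0 < R) (hsub : ball x₀ (2 * R) ⊆ Ω) :
    ∫ x in ball x₀ R, u x ^ (s - q) ≤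
      (youngConst (k + 1) (q - 1) p * M ^ (p - q) * (K / R) ^ p
        + youngConst (k + 1) (q - 1) q * M ^ (q - q) * (K / R) ^ q)
        * volume.real (ball x₀ (2 * R)) := by
  have hηΩ := hη.tsupport_subset.trans hsub
  have hdiff : DifferentiableOn ℝ u Ω := hu.differentiableOn one_ne_zero
  calc ∫ x in ball x₀ R, u x ^ (s - q)
      ≤ ∫ x in Ω, u x ^ (s - 1) * testFunction u η q k x :=
        setIntegral_ball_rpow_le_setIntegral_mul_testFunction hΩ hu hupos hη hR.le hsub
    _ ≤ _ := hsuper _ (contDiff_testFunction hΩ hu hupos hη.contDiff hηΩ)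
        hη.hasCompactSupport_testFunction (tsupport_testFunction_subset.trans hηΩ)
        (testFunction_nonneg hupos hη.nonneg hηΩ)
    _ ≤ _ := by
        rw [add_mul]
        exact add_le_add
          (setIntegral_rpow_mul_inner_gradient_testFunction_le hq hqp hpk hΩ hdiff hupos huM hη
            hR hsub)
          (setIntegral_rpow_mul_inner_gradient_testFunction_le hq le_rfl (by linarith) hΩ hdiff
            hupos huM hη hR hsub)

end WeakSupersolution

lemma EuclideanSpace.volume_real_ball_eq_pow_mul {N : ℕ} (x : EuclideanSpace ℝ (Fin N)) {r : ℝ}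
    (hr : 0 < r) :
    volume.real (ball x r) = r ^ N * volume.real (ball (0 : EuclideanSpace ℝ (Fin N)) 1) := by
  rw [measureReal_def, Measure.addHaar_ball_of_pos _ _ hr, ENNReal.toReal_mul,
    ENNReal.toReal_ofReal (by positivity), finrank_euclideanSpace_fin, measureReal_def]

lemma div_rpow_mul_pow_le {K R q r : ℝ} {N : ℕ} (hK : 0 ≤ K) (hR : 1 ≤ R) (hqr : q ≤ r) :
    (K / R) ^ r * R ^ N ≤ K ^ r * R ^ ((N : ℝ) - q) := by
  have hR₀ : 0 < R := by linarith
  calc (K / R) ^ r * R ^ N = K ^ r * R ^ ((N : ℝ) - r) := by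
        rw [div_rpow hK hR₀.le, rpow_sub hR₀, rpow_natCast]; ring
    _ ≤ K ^ r * R ^ ((N : ℝ) - q) := by
        gcongr

lemma add_mul_div_rpow_mul_volume_real_ball_le {N : ℕ} (x₀ : EuclideanSpace ℝ (Fin N))
    {a b K R p q : ℝ} (ha : 0 ≤ a) (hb : 0 ≤ b) (hK : 0 ≤ K) (hR : 1 ≤ R) (hqp : q ≤ p) :
    (a * (K / R) ^ p + b * (K / R) ^ q) * volume.real (ball x₀ (2 * R)) ≤
      2 ^ N * volume.real (ball (0 : EuclideanSpace ℝ (Fin N)) 1) * (a * K ^ p + b * K ^ q)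
        * R ^ ((N : ℝ) - q) := by
  rw [EuclideanSpace.volume_real_ball_eq_pow_mul _ (by linarith), mul_pow]
  calc (a * (K / R) ^ p + b * (K / R) ^ q)
        * (2 ^ N * R ^ N * volume.real (ball (0 : EuclideanSpace ℝ (Fin N)) 1))
      = 2 ^ N * volume.real (ball (0 : EuclideanSpace ℝ (Fin N)) 1)
          * (a * ((K / R) ^ p * R ^ N) + b * ((K / R) ^ q * R ^ N)) := by ring
    _ ≤ 2 ^ N * volume.real (ball (0 : EuclideanSpace ℝ (Fin N)) 1)
          * (a * (K ^ p * R ^ ((N : ℝ) - q)) + b * (K ^ q * R ^ ((N : ℝ) - q))) := by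
        gcongr _ * (_ * ?_ + _ * ?_)
        · exact div_rpow_mul_pow_le hK hR hqp
        · exact div_rpow_mul_pow_le hK hR le_rfl
    _ = _ := by ring

theorem ball_integral_estimate_bounded_general
    (N : ℕ) (p q s : ℝ) (hq1 : 1 < q) (hqp : q < p)
    (Ω : Set (EuclideanSpace ℝ (Fin N))) (hext : IsExteriorDomain Ω)
    (u : EuclideanSpace ℝ (Fin N) → ℝ) (hu : ContDiffOn ℝ 1 u Ω)
    (hupos : ∀ x ∈ Ω, 0 < u x) (hbdd : ∃ M : ℝ, ∀ x ∈ Ω, u x ≤ M)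
    (hsuper : WeakPQSuper N p q Ω u (fun x => u x ^ (s - 1))) :
    ∃ C > (0 : ℝ), ∀ (x₀ : EuclideanSpace ℝ (Fin N)) (R : ℝ), 1 ≤ R →
      ball x₀ (2 * R) ⊆ Ω →
      ∫ x in ball x₀ R, u x ^ (s - q) ≤ C * R ^ ((N : ℝ) - q) := by
  obtain ⟨M, hM⟩ := hbdd
  obtain ⟨K, hK, hcutoff⟩ := exists_isCutoff (E := EuclideanSpace ℝ (Fin N))
  set k := ⌈p⌉₊
  set A : ℝ → ℝ := fun r => youngConst (k + 1) (q - 1) r * max M 0 ^ (r - q)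
  have hA : ∀ r, 0 ≤ A r := fun r => mul_nonneg
    (youngConst_nonneg (by positivity) (by linarith) r) (rpow_nonneg (le_max_right _ _) _)
  set C₀ := 2 ^ N * volume.real (ball (0 : EuclideanSpace ℝ (Fin N)) 1)
    * (A p * K ^ p + A q * K ^ q)
  have hC₀ : 0 ≤ C₀ := by have := hA p; have := hA q; positivity
  refine ⟨C₀ + 1, by linarith, fun x₀ R hR hsub => ?_⟩
  obtain ⟨η, hη⟩ := hcutoff x₀ (by linarith : 0 < R)
  calc ∫ x in ball x₀ R, u x ^ (s - q)
      ≤ (A p * (K / R) ^ p + A q * (K / R) ^ q) * volume.real (ball x₀ (2 * R)) :=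
        setIntegral_ball_rpow_le_of_weakPQSuper hq1 hqp.le (by linarith [Nat.le_ceil p])
          hext.1 hu hupos (fun x hx => (hM x hx).trans (le_max_left _ _)) hsuper hη
          (by linarith) hsub
    _ ≤ C₀ * R ^ ((N : ℝ) - q) :=
        add_mul_div_rpow_mul_volume_real_ball_le x₀ (hA p) (hA q) hK hR hqp.le
    _ ≤ (C₀ + 1) * R ^ ((N : ℝ) - q) :=
        mul_le_mul_of_nonneg_right (by linarith) (rpow_nonneg (by linarith) _)

/-- Ball integral estimate for bounded positive supersolutions of
`-Δ_p u - Δ_q u ≥ u^{s-1}` in exterior domains when `1 < q < s ≤ p`. -/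
theorem ball_integral_estimate_bounded
    (N : ℕ) (hN : 1 ≤ N) (p q s : ℝ) (hq1 : 1 < q) (hqs : q < s) (hsp : s ≤ p)
    (hqp : q < p)
    (Ω : Set (EuclideanSpace ℝ (Fin N))) (hext : IsExteriorDomain Ω)
    (u : EuclideanSpace ℝ (Fin N) → ℝ) (hu : ContDiffOn ℝ 1 u Ω)
    (hupos : ∀ x ∈ Ω, 0 < u x) (hbdd : ∃ M : ℝ, ∀ x ∈ Ω, u x ≤ M)
    (hsuper : WeakPQSuper N p q Ω u (fun x => u x ^ (s - 1))) :
    ∃ C > (0 : ℝ), ∀ (x₀ : EuclideanSpace ℝ (Fin N)) (R : ℝ), 1 ≤ R →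
      ball x₀ (2 * R) ⊆ Ω →
      ∫ x in ball x₀ R, u x ^ (s - q) ≤ C * R ^ ((N : ℝ) - q) :=
  ball_integral_estimate_bounded_general N p q s hq1 hqp Ω hext u hu hupos hbdd hsuper
end
end
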